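/- arXiv:2111.08789 — 2 statements merged into one kernel-verified Lean document; each statement's English description precedes it below -/
import Mathlib

section
/- For every integer m ≥ 1 and all real numbers x₁, …, x_m in [0, π/2], one has ∑_{k=1}^m Λ(x_k) ≤ m · Λ((x₁ + ⋯ + x_m)/m). -/
/-!
By the fundamental theorem of calculus `Λ' x = -log (2 sin x)` wherever `sin x ≠ 0`. Since `sin`
increases on `(0, π/2)`, `Λ'` decreases there, so `Λ` is concave on `[0, π/2]` and the inequality
is Jensen's inequality with equal weights. The integrand is integrable near the zeros of `sin`
because `log ∘ f` is locally integrable for any analytic `f`.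
-/

open Real MeasureTheory intervalIntegral Set

noncomputable def lobachevsky (x : ℝ) : ℝ :=
  -∫ t in (0:ℝ)..x, Real.log |2 * Real.sin t|

theorem ConcaveOn.sum_le_card_mul_map_average {s : Set ℝ} {f : ℝ → ℝ} (hf : ConcaveOn ℝ s f)
    {ι : Type*} (t : Finset ι) (p : ι → ℝ) (hp : ∀ i ∈ t, p i ∈ s) :
    ∑ i ∈ t, f (p i) ≤ t.card * f ((∑ i ∈ t, p i) / t.card) := by
  rcases t.eq_empty_or_nonempty with rfl | ht
  · simp
  have hcard : (0 : ℝ) < t.card := by exact_mod_cast ht.card_pos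
  have h := hf.le_map_centerMass (w := fun _ => 1) (fun _ _ => zero_le_one)
    (by simpa using hcard) hp
  simp only [Finset.centerMass, Finset.sum_const, nsmul_eq_mul, mul_one, smul_eq_mul, one_mul,
    Function.comp] at h
  rw [inv_mul_eq_div, inv_mul_eq_div, div_le_iff₀' hcard] at h
  exact h

theorem intervalIntegrable_log_abs_two_mul_sin (a b : ℝ) :
    IntervalIntegrable (fun t => log |2 * sin t|) volume a b := by
  simpa only [Function.comp_def, log_abs] using
    (analyticOnNhd_const.mul analyticOnNhd_sin).meromorphicOn.intervalIntegrable_log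
      (f := fun t => 2 * sin t)

theorem continuous_lobachevsky : Continuous lobachevsky :=
  (continuous_primitive intervalIntegrable_log_abs_two_mul_sin 0).neg

theorem hasDerivAt_lobachevsky {x : ℝ} (hx : sin x ≠ 0) :
    HasDerivAt lobachevsky (-log |2 * sin x|) x := by
  have hcont : Continuous fun t => |2 * sin t| := by fun_prop
  refine (integral_hasDerivAt_right (intervalIntegrable_log_abs_two_mul_sin 0 x)
    (measurable_log.comp hcont.measurable).stronglyMeasurable.stronglyMeasurableAtFilter
    ((continuousAt_log ?_).comp hcont.continuousAt)).neg
  simpa using hx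

theorem monotoneOn_log_abs_two_mul_sin :
    MonotoneOn (fun t => log |2 * sin t|) (Ioo 0 (π / 2)) := by
  intro a ha b hb hab
  have hsin_a : 0 < sin a := sin_pos_of_pos_of_lt_pi ha.1 (by linarith [ha.2, pi_pos])
  have hsin_le : sin a ≤ sin b :=
    sin_le_sin_of_le_of_le_pi_div_two (by linarith [ha.1, pi_pos]) hb.2.le hab
  simp only
  rw [abs_of_pos (by positivity), abs_of_pos (by linarith)]
  exact log_le_log (by positivity) (by linarith)

theorem concaveOn_lobachevsky : ConcaveOn ℝ (Icc 0 (π / 2)) lobachevsky := by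
  have hsin : ∀ y ∈ Ioo 0 (π / 2), sin y ≠ 0 := fun y hy =>
    (sin_pos_of_pos_of_lt_pi hy.1 (by linarith [hy.2, pi_pos])).ne'
  refine AntitoneOn.concaveOn_of_deriv (convex_Icc _ _) continuous_lobachevsky.continuousOn
    ?_ ?_ <;> rw [interior_Icc]
  · exact fun y hy => (hasDerivAt_lobachevsky (hsin y hy)).differentiableAt.differentiableWithinAt
  · intro a ha b hb hab
    rw [(hasDerivAt_lobachevsky (hsin a ha)).deriv, (hasDerivAt_lobachevsky (hsin b hb)).deriv]
    exact neg_le_neg (monotoneOn_log_abs_two_mul_sin ha hb hab)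

theorem lobachevsky_jensen_general (m : ℕ) (x : Fin m → ℝ)
    (hx : ∀ k, x k ∈ Set.Icc 0 (Real.pi / 2)) :
    ∑ k, lobachevsky (x k) ≤ (m : ℝ) * lobachevsky ((∑ k, x k) / m) := by
  simpa using concaveOn_lobachevsky.sum_le_card_mul_map_average Finset.univ x (fun k _ => hx k)

/-- For every integer `m ≥ 1` and reals `x₁, …, x_m ∈ [0, π/2]`,
`∑ Λ(x_k) ≤ m · Λ((x₁ + ⋯ + x_m)/m)`. -/
theorem lobachevsky_jensen (m : ℕ) (hm : 1 ≤ m) (x : Fin m → ℝ)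
    (hx : ∀ k, x k ∈ Set.Icc 0 (Real.pi / 2)) :
    ∑ k, lobachevsky (x k) ≤ (m : ℝ) * lobachevsky ((∑ k, x k) / m) :=
  lobachevsky_jensen_general m x hx
end

section
/- Let k ≥ 2 be an integer and let α₁, …, α_{2k} be real numbers in [0, π/2] with ∑_{i=1}^{2k} α_i = 2π. Then ∑_{i=1}^{2k} (1/2)·Λ(α_i) ≤ k·Λ(π/k). -/
open Real

lemma lob_integrand_measurable : Measurable (fun t : ℝ => Real.log |2 * Real.sin t|) :=
  Real.measurable_log.comp ((continuous_const.mul Real.continuous_sin).measurable.abs)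

/-- `log |2 sin t|` is interval integrable on `[0, π/2]`. -/
lemma lob_intervalIntegrable :
    IntervalIntegrable (fun t : ℝ => Real.log |2 * Real.sin t|) MeasureTheory.volume 0
      (Real.pi / 2) := by
  have hbd : IntervalIntegrable (fun t : ℝ => 2 * t ^ (-(1:ℝ)/2) + 3)
      MeasureTheory.volume 0 (Real.pi / 2) := by
    apply IntervalIntegrable.add _ intervalIntegrable_const
    exact (intervalIntegral.intervalIntegrable_rpow' (by norm_num)).const_mul 2
  refine hbd.mono_fun' lob_integrand_measurable.aestronglyMeasurable ?_
  have hsub : Set.uIoc (0:ℝ) (Real.pi / 2) = Set.Ioc 0 (Real.pi / 2) :=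
    Set.uIoc_of_le (by positivity)
  filter_upwards [MeasureTheory.ae_restrict_mem measurableSet_uIoc] with t ht
  rw [hsub] at ht
  obtain ⟨ht0, ht2⟩ := ht
  have hsinpos : 0 < Real.sin t := Real.sin_pos_of_pos_of_lt_pi ht0
    (lt_of_le_of_lt ht2 (by linarith [Real.pi_pos]))
  have habs : |2 * Real.sin t| = 2 * Real.sin t := abs_of_pos (by linarith)
  -- lower bound : `t ≤ 2 sin t` since `sin t ≥ (2/π) t` (concavity) — use instead `sin t ≥ t/2`?
  -- We use: `2 * sin t ≥ t` via `mul_le_sin`-style bound. Simpler: `sin t ≥ t * (2/π)`.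
  have hsin_le : Real.sin t ≤ t := Real.sin_le ht0.le
  have hπ : (0:ℝ) < Real.pi := Real.pi_pos
  have hsin_ge : 2 / Real.pi * t ≤ Real.sin t := by
    have := Real.mul_le_sin (by positivity) ht2
    linarith [this]
  have h2t : t ≤ 2 * Real.sin t := by
    have h1 : t ≤ 4 * t / Real.pi := by
      rw [le_div_iff₀ hπ]
      nlinarith [Real.pi_lt_d2, ht0]
    have h2 : 4 * t / Real.pi = 2 * (2 / Real.pi * t) := by ring
    nlinarith [hsin_ge]
  have hlog_lower : Real.log t ≤ Real.log |2 * Real.sin t| := by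
    rw [habs]; exact Real.log_le_log ht0 h2t
  have hlog_upper : Real.log |2 * Real.sin t| ≤ 3 := by
    rw [habs]
    calc Real.log (2 * Real.sin t) ≤ Real.log (2 * t) :=
          Real.log_le_log (by linarith) (by linarith)
      _ ≤ 2 * t - 1 := by
          have := Real.log_le_sub_one_of_pos (x := 2 * t) (by linarith)
          linarith
      _ ≤ 3 := by nlinarith [Real.pi_lt_d2]
  have hrpow_pos : (0:ℝ) < t ^ (-(1:ℝ)/2) := Real.rpow_pos_of_pos ht0 _
  have hneglog : -Real.log t ≤ 2 * t ^ (-(1:ℝ)/2) := by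
    rcases le_or_gt 1 t with h1 | h1
    · have : 0 ≤ Real.log t := Real.log_nonneg h1
      linarith
    · have hlt : Real.log (t ^ (-(1:ℝ)/2)) ≤ t ^ (-(1:ℝ)/2) - 1 :=
        Real.log_le_sub_one_of_pos hrpow_pos
      rw [Real.log_rpow ht0] at hlt
      have : -Real.log t ≤ 2 * (t ^ (-(1:ℝ)/2) - 1) := by linarith
      linarith
  have : |Real.log (|2 * Real.sin t|)| ≤ 2 * t ^ (-(1:ℝ)/2) + 3 := by
    rw [abs_le]
    constructor
    · have : -(2 * t ^ (-(1:ℝ)/2)) ≤ Real.log t := by linarith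
      linarith
    · linarith
  simpa [Real.norm_eq_abs] using this

/-- The Lobachevsky function is concave on `[0, π/2]`. -/
lemma lobachevsky_concaveOn : ConcaveOn ℝ (Set.Icc 0 (Real.pi / 2)) lobachevsky := by
  have hπ : (0:ℝ) < Real.pi := Real.pi_pos
  set g : ℝ → ℝ := fun t => Real.log |2 * Real.sin t| with hg
  have hIcc : Set.uIcc (0:ℝ) (Real.pi / 2) = Set.Icc 0 (Real.pi / 2) :=
    Set.uIcc_of_le (by positivity)
  have hintOn : MeasureTheory.IntegrableOn g (Set.uIcc (0:ℝ) (Real.pi / 2))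
      MeasureTheory.volume := by
    rw [hIcc, integrableOn_Icc_iff_integrableOn_Ioc]
    exact (intervalIntegrable_iff_integrableOn_Ioc_of_le (by positivity)).mp
      lob_intervalIntegrable
  -- continuity of the primitive
  have hcont : ContinuousOn lobachevsky (Set.Icc 0 (Real.pi / 2)) := by
    have := intervalIntegral.continuousOn_primitive_interval
      (a := 0) (b := Real.pi / 2) (f := g) hintOn
    rw [hIcc] at this
    exact this.neg
  -- derivative at interior points
  have hderiv : ∀ x ∈ Set.Ioo (0:ℝ) (Real.pi / 2), HasDerivAt lobachevsky (-(g x)) x := by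
    intro x hx
    have hx0 : 0 < x := hx.1
    have hx2 : x < Real.pi / 2 := hx.2
    have hsinpos : 0 < Real.sin x := Real.sin_pos_of_pos_of_lt_pi hx0 (by linarith)
    have hcg : ContinuousAt g x := by
      have h2 : (2 * Real.sin x) ≠ 0 := by positivity
      have habs : |2 * Real.sin x| ≠ 0 := by simpa [abs_eq_zero] using h2
      exact ContinuousAt.log
        ((continuous_const.mul Real.continuous_sin).abs.continuousAt) habs
    have hii : IntervalIntegrable g MeasureTheory.volume 0 x := by
      apply lob_intervalIntegrable.mono_set
      rw [hIcc, Set.uIcc_of_le hx0.le]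
      exact Set.Icc_subset_Icc le_rfl hx2.le
    have := intervalIntegral.integral_hasDerivAt_right hii
      lob_integrand_measurable.stronglyMeasurable.stronglyMeasurableAtFilter hcg
    exact this.neg
  have hdiff : DifferentiableOn ℝ lobachevsky (interior (Set.Icc 0 (Real.pi / 2))) := by
    rw [interior_Icc]
    exact fun x hx => (hderiv x hx).differentiableAt.differentiableWithinAt
  have hanti : AntitoneOn (deriv lobachevsky) (interior (Set.Icc 0 (Real.pi / 2))) := by
    rw [interior_Icc]
    intro x hx y hy hxy
    rw [(hderiv x hx).deriv, (hderiv y hy).deriv]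
    have hsx : 0 < Real.sin x := Real.sin_pos_of_pos_of_lt_pi hx.1 (by linarith [hx.2])
    have hsxy : Real.sin x ≤ Real.sin y := by
      apply Real.strictMonoOn_sin.monotoneOn ⟨by linarith [hx.1], hx.2.le⟩
        ⟨by linarith [hy.1], hy.2.le⟩ hxy
    have hax : |2 * Real.sin x| = 2 * Real.sin x := abs_of_pos (by linarith)
    have hay : |2 * Real.sin y| = 2 * Real.sin y := abs_of_pos (by linarith)
    simp only [hg, hax, hay, neg_le_neg_iff]
    exact Real.log_le_log (by linarith) (by linarith)
  exact hanti.concaveOn_of_deriv (convex_Icc _ _) hcont hdiff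

/-- For an integer `k ≥ 2` and reals `α₁, …, α_{2k} ∈ [0, π/2]` summing to `2π`,
`∑ (1/2)·Λ(αᵢ) ≤ k·Λ(π/k)`. -/
theorem cone_volume_bound_not_quasi_incident (k : ℕ) (hk : 2 ≤ k)
    (α : Fin (2 * k) → ℝ) (hα : ∀ i, α i ∈ Set.Icc 0 (Real.pi / 2))
    (hsum : ∑ i, α i = 2 * Real.pi) :
    ∑ i, (1 / 2) * lobachevsky (α i) ≤ (k : ℝ) * lobachevsky (Real.pi / k) := by
  have hkpos : (0:ℝ) < k := by exact_mod_cast Nat.lt_of_lt_of_le Nat.zero_lt_two hk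
  have hπ : (0:ℝ) < Real.pi := Real.pi_pos
  set w : Fin (2 * k) → ℝ := fun _ => ((2 * k : ℝ))⁻¹ with hw
  have hwsum : ∑ i : Fin (2 * k), w i = 1 := by
    simp only [hw, Finset.sum_const, Finset.card_univ, Fintype.card_fin, nsmul_eq_mul]
    push_cast
    field_simp
    try ring
  have hmean : ∑ i : Fin (2 * k), w i • α i = Real.pi / k := by
    simp only [hw, smul_eq_mul, ← Finset.mul_sum, hsum]
    push_cast
    field_simp
    try ring
  have hmem : Real.pi / k ∈ Set.Icc 0 (Real.pi / 2) := by
    constructor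
    · positivity
    · apply div_le_div_of_nonneg_left hπ.le (by norm_num) ?_
      exact_mod_cast hk
  have hjensen := lobachevsky_concaveOn.le_map_sum (t := Finset.univ) (w := w) (p := α)
    (fun i _ => by positivity) hwsum (fun i _ => hα i)
  rw [hmean] at hjensen
  have hmul := mul_le_mul_of_nonneg_left hjensen hkpos.le
  calc ∑ i, (1 / 2) * lobachevsky (α i)
      = (k : ℝ) * ∑ i : Fin (2 * k), w i • lobachevsky (α i) := by
        rw [Finset.mul_sum]
        apply Finset.sum_congr rfl
        intro i _
        simp only [hw, smul_eq_mul, ← mul_assoc]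
        congr 1
        field_simp
        try ring
    _ ≤ (k : ℝ) * lobachevsky (Real.pi / k) := hmul
end
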